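/- Let d ≥ 1, k ≥ 1, and n ≥ 2k be integers. If a real polynomial Q in d variables satisfies L_k Q = −(n−2k)(n+d) Q, then the polynomial P(x) = (1−‖x‖²)^k Q(x) satisfies L_{−k} P = −n(n−2k+d) P. -/
import Mathlib


open MvPolynomial

/-- The Laplacian `Δ = ∑ ∂²/∂xᵢ²` acting on polynomials in `d` variables. -/
noncomputable def lap {d : ℕ} (P : MvPolynomial (Fin d) ℝ) : MvPolynomial (Fin d) ℝ :=
  ∑ i, pderiv i (pderiv i P)

/-- The Euler operator `⟨x,∇⟩ = ∑ xᵢ ∂/∂xᵢ` acting on polynomials in `d` variables. -/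
noncomputable def eulerOp {d : ℕ} (P : MvPolynomial (Fin d) ℝ) : MvPolynomial (Fin d) ℝ :=
  ∑ i, X i * pderiv i P

/-- The operator `L_μ P = ΔP − ⟨x,∇⟩²P − (2μ+d)⟨x,∇⟩P`. -/
noncomputable def Lop (d : ℕ) (μ : ℝ) (P : MvPolynomial (Fin d) ℝ) : MvPolynomial (Fin d) ℝ :=
  lap P - eulerOp (eulerOp P) - (2 * μ + (d : ℝ)) • eulerOp P

/-- The polynomial `‖x‖² = x₁² + ⋯ + x_d²`. -/
noncomputable def normSq (d : ℕ) : MvPolynomial (Fin d) ℝ := ∑ i, X i ^ 2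

section Aux

variable {d : ℕ}

lemma pderiv_normSq (i : Fin d) : pderiv i (normSq d) = 2 * X i := by
  classical
  simp only [normSq, map_sum]
  rw [Finset.sum_eq_single i]
  · rw [pow_two, pderiv_mul, pderiv_X_self]; ring
  · intro j _ hj
    rw [pow_two, pderiv_mul, pderiv_X_of_ne hj]; ring
  · simp

lemma eulerOp_add (P Q : MvPolynomial (Fin d) ℝ) : eulerOp (P + Q) = eulerOp P + eulerOp Q := by
  simp [eulerOp, map_add, mul_add, Finset.sum_add_distrib]

lemma eulerOp_smul (c : ℝ) (P : MvPolynomial (Fin d) ℝ) : eulerOp (c • P) = c • eulerOp P := by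
  simp [eulerOp, Finset.smul_sum, mul_smul_comm]

lemma eulerOp_mul (P Q : MvPolynomial (Fin d) ℝ) :
    eulerOp (P * Q) = eulerOp P * Q + P * eulerOp Q := by
  simp only [eulerOp, pderiv_mul, mul_add, Finset.sum_add_distrib, Finset.sum_mul,
    Finset.mul_sum]
  congr 1
  · exact Finset.sum_congr rfl fun i _ => by ring
  · exact Finset.sum_congr rfl fun i _ => by ring

lemma lap_mul (P Q : MvPolynomial (Fin d) ℝ) :
    lap (P * Q) = lap P * Q + 2 * (∑ i, pderiv i P * pderiv i Q) + P * lap Q := by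
  simp only [lap, pderiv_mul, map_add, Finset.sum_add_distrib, Finset.sum_mul, Finset.mul_sum,
    two_mul]
  ring

lemma eulerOp_normSq : eulerOp (normSq d) = 2 * normSq d := by
  rw [eulerOp]
  simp only [pderiv_normSq]
  rw [normSq, Finset.mul_sum]
  exact Finset.sum_congr rfl fun i _ => by ring

lemma lap_normSq : lap (normSq d) = (2 * (d : ℝ)) • 1 := by
  rw [lap]
  simp only [pderiv_normSq]
  have h : ∀ i : Fin d, pderiv i (2 * X i) = (2 : MvPolynomial (Fin d) ℝ) := by
    intro i
    rw [pderiv_mul, pderiv_X_self,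
      show (2 : MvPolynomial (Fin d) ℝ) = C 2 from (map_ofNat C 2).symm, pderiv_C]
    simp
  simp only [h, Finset.sum_const, Finset.card_univ, Fintype.card_fin, nsmul_eq_mul]
  rw [smul_eq_C_mul, mul_one, map_mul, map_ofNat, map_natCast]
  ring

lemma eulerOp_one_sub_normSq : eulerOp (1 - normSq d) = (-2 : ℝ) • normSq d := by
  have h1 : eulerOp (1 : MvPolynomial (Fin d) ℝ) = 0 := by simp [eulerOp]
  have h2 : eulerOp (1 - normSq d) = eulerOp 1 - eulerOp (normSq d) := by
    simp [eulerOp, map_sub, mul_sub, Finset.sum_sub_distrib]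
  rw [h2, h1, eulerOp_normSq]
  rw [smul_eq_C_mul, map_neg, map_ofNat]
  ring

lemma lap_one_sub_normSq : lap (1 - normSq d) = (-(2 * (d : ℝ))) • 1 := by
  have h1 : lap (1 : MvPolynomial (Fin d) ℝ) = 0 := by simp [lap]
  have h2 : lap (1 - normSq d) = lap 1 - lap (normSq d) := by
    simp [lap, map_sub, Finset.sum_sub_distrib]
  rw [h2, h1, lap_normSq, zero_sub, neg_smul]

lemma cross_sum (R : MvPolynomial (Fin d) ℝ) :
    ∑ i, pderiv i (1 - normSq d) * pderiv i R = (-2 : ℝ) • eulerOp R := by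
  have h : ∀ i : Fin d, pderiv i (1 - normSq d) = -(2 * X i) := by
    intro i
    rw [map_sub, pderiv_normSq]
    simp
  simp only [h, eulerOp, Finset.smul_sum]
  exact Finset.sum_congr rfl fun i _ => by
    rw [smul_eq_C_mul, map_neg, map_ofNat]; ring

/-- One-step identity: `L_μ((1-‖x‖²)·R) = (1-‖x‖²)·L_{μ+2}R + 4(μ+1)·‖x‖²R − 2d·(1-‖x‖²)R`. -/
lemma Lop_one_sub_normSq_mul (μ : ℝ) (R : MvPolynomial (Fin d) ℝ) :
    Lop d μ ((1 - normSq d) * R)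
      = (1 - normSq d) * Lop d (μ + 2) R + (4 * (μ + 1)) • (normSq d * R)
        - (2 * (d : ℝ)) • ((1 - normSq d) * R) := by
  simp only [Lop, lap_mul, eulerOp_mul, eulerOp_add, eulerOp_smul, eulerOp_one_sub_normSq,
    lap_one_sub_normSq, cross_sum, eulerOp_normSq, smul_mul_assoc, mul_smul_comm]
  simp only [smul_eq_C_mul, map_add, map_mul, map_ofNat, map_one, map_neg, map_natCast,
    smul_sub, mul_sub, sub_mul, add_mul, mul_add]
  ring

/-- Iterated identity for `(1-‖x‖²)^{k+1}`. -/
lemma Lop_one_sub_normSq_pow_mul (μ : ℝ) (k : ℕ) (Q : MvPolynomial (Fin d) ℝ) :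
    Lop d μ ((1 - normSq d) ^ (k + 1) * Q)
      = (1 - normSq d) ^ (k + 1) * Lop d (μ + 2 * ((k : ℝ) + 1)) Q
        + (4 * ((k : ℝ) + 1) * (μ + (k : ℝ) + 1)) • ((1 - normSq d) ^ k * (normSq d * Q))
        - (2 * ((k : ℝ) + 1) * (d : ℝ)) • ((1 - normSq d) ^ (k + 1) * Q) := by
  induction k generalizing μ with
  | zero =>
    have h : (1 - normSq d) ^ (0 + 1) * Q = (1 - normSq d) * Q := by ring
    rw [h, Lop_one_sub_normSq_mul]
    norm_num
  | succ k ih =>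
    have h : (1 - normSq d) ^ (k + 1 + 1) * Q
        = (1 - normSq d) * ((1 - normSq d) ^ (k + 1) * Q) := by ring
    rw [h, Lop_one_sub_normSq_mul, ih (μ + 2)]
    have harg : μ + 2 + 2 * ((k : ℝ) + 1) = μ + 2 * (((k : ℕ) + 1 : ℕ) + 1) := by
      push_cast; ring
    rw [harg]
    push_cast
    simp only [smul_eq_C_mul, map_add, map_mul, map_ofNat, map_one, map_neg, map_natCast,
      mul_sub, sub_mul, add_mul, mul_add]
    ring

end Aux

/-- if `L_k Q = −(n−2k)(n+d) Q` then `P = (1−‖x‖²)^k Q` satisfies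
`L_{−k} P = −n(n−2k+d) P`. -/
theorem stmt5 (d : ℕ) (hd : 1 ≤ d) (k : ℕ) (hk : 1 ≤ k) (n : ℕ) (hn : 2 * k ≤ n)
    (Q : MvPolynomial (Fin d) ℝ)
    (hQ : Lop d (k : ℝ) Q = (-((n : ℝ) - 2 * (k : ℝ)) * ((n : ℝ) + (d : ℝ))) • Q) :
    Lop d (-(k : ℝ)) ((1 - normSq d) ^ k * Q) =
      (-(n : ℝ) * ((n : ℝ) - 2 * (k : ℝ) + (d : ℝ))) • ((1 - normSq d) ^ k * Q) := by
  obtain ⟨m, rfl⟩ : ∃ m, k = m + 1 := ⟨k - 1, (Nat.succ_pred_eq_of_pos hk).symm⟩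
  rw [Lop_one_sub_normSq_pow_mul]
  have h1 : -((m : ℕ) + 1 : ℕ) + 2 * ((m : ℝ) + 1) = (((m : ℕ) + 1 : ℕ) : ℝ) := by
    push_cast; ring
  have h2 : 4 * ((m : ℝ) + 1) * (-((((m : ℕ) + 1 : ℕ)) : ℝ) + (m : ℝ) + 1) = 0 := by
    push_cast; ring
  rw [h1, h2, hQ, zero_smul, add_zero, mul_smul_comm, ← sub_smul]
  congr 1
  push_cast
  ring
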